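/- Let n≥2 and let p≥1, p'≥n be integers with N=p'/p−n. For all Λ,Λ'∈P^{(p,p')}: X_{∅,Λ,Λ'}(q) = δ_{Λ,Λ'}, where ∅ is the empty partition. -/

import Mathlib

namespace ABailey

noncomputable section

attribute [local instance] Classical.propDecidable

/-! ## Formal `q`-series with rational exponents, represented by coefficient functions.
`f : CF` represents the formal series `∑_{r ∈ ℚ} (f r) · q^r`; equality of such
coefficient functions is exactly coefficientwise equality of formal series. -/

abbrev CF : Type := ℚ → ℚ

/-- Coefficientwise sum of a family of formal series. -/
def cfSum {ι : Type*} (F : ι → CF) : CF := fun r => ∑ᶠ i, F i r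

/-- The coefficient of `q^r` in an ordinary polynomial in `q`. -/
def coeffAt (P : Polynomial ℚ) (r : ℚ) : ℚ :=
  if r.den = 1 ∧ 0 ≤ r.num then P.coeff r.num.toNat else 0

/-- The coefficient of `q^r` in an ordinary formal power series in `q`. -/
def coeffAtPS (φ : PowerSeries ℚ) (r : ℚ) : ℚ :=
  if r.den = 1 ∧ 0 ≤ r.num then (PowerSeries.coeff r.num.toNat) φ else 0

def ofPoly (P : Polynomial ℚ) : CF := fun r => coeffAt P r

/-- Product (convolution) of two formal series. -/
def cfMul (f g : CF) : CF := fun r => ∑ᶠ p : ℚ, f p * g (r - p)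

/-- Product of a formal series with a power series in `q`. -/
def cfMulPS (f : CF) (φ : PowerSeries ℚ) : CF :=
  fun r => ∑ᶠ p : ℚ, f p * coeffAtPS φ (r - p)

/-- Coefficientwise convergence: at every power of `q` only finitely many
members of the family contribute. -/
def CFSumFin {ι : Type*} (F : ι → CF) : Prop :=
  ∀ r : ℚ, (Function.support fun i => F i r).Finite

def CFMulFin (f g : CF) : Prop :=
  ∀ r : ℚ, (Function.support fun p : ℚ => f p * g (r - p)).Finite

def CFMulPSFin (f : CF) (φ : PowerSeries ℚ) : Prop :=
  ∀ r : ℚ, (Function.support fun p : ℚ => f p * coeffAtPS φ (r - p)).Finite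

/-! ## q-Pochhammer symbols and Gaussian binomial coefficients -/

/-- `(q)_r = ∏_{k=1}^r (1 - q^k)`. -/
def qp (r : ℕ) : Polynomial ℚ := ∏ k ∈ Finset.range r, (1 - Polynomial.X ^ (k + 1))

/-- the Gaussian binomial coefficient `[n; m]_q = (q)_n / ((q)_m (q)_{n-m})`. -/
def qbin (n m : ℕ) : Polynomial ℚ := if m ≤ n then qp n / (qp m * qp (n - m)) else 0

def qbinI (n m : ℤ) : Polynomial ℚ := if 0 ≤ m ∧ m ≤ n then qbin n.toNat m.toNat else 0

def qbinQ (n m : ℚ) : Polynomial ℚ := if n.den = 1 ∧ m.den = 1 then qbinI n.num m.num else 0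

/-- a polynomial viewed as a power series. -/
def polyPS (P : Polynomial ℚ) : PowerSeries ℚ := PowerSeries.mk fun d => P.coeff d

/-- `(q)_∞ = ∏_{k ≥ 1} (1 - q^k)` as a formal power series. -/
def qpInf : PowerSeries ℚ := PowerSeries.mk fun d => (qp d).coeff d

/-! ## Partitions and compositions, as finitely supported functions `ℕ → ℕ`
(`f i` is the `(i+1)`-st part). -/

def IsCompositionF (f : ℕ → ℕ) : Prop := (Function.support f).Finite

def IsPartitionF (f : ℕ → ℕ) : Prop :=
  (∀ i j : ℕ, i ≤ j → f j ≤ f i) ∧ (Function.support f).Finite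

/-- the weight `|λ|`. -/
def wt (f : ℕ → ℕ) : ℕ := ∑ᶠ i, f i

/-- the number of nonzero parts `l(λ)`. -/
def lenP (f : ℕ → ℕ) : ℕ := (Function.support f).ncard

/-- conjugate partition: `conj f a = f'_{a+1}` (`0`-indexed). -/
def conj (f : ℕ → ℕ) : ℕ → ℕ := fun a => {i : ℕ | a < f i}.ncard

/-- `n(λ) = ∑_i (i-1) λ_i`. -/
def nstat (f : ℕ → ℕ) : ℕ := ∑ᶠ i, i * f i

/-- `multOf f a = m_{a+1}(f) = f'_{a+1} - f'_{a+2}`, the multiplicity of the part `a+1`. -/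
def multOf (f : ℕ → ℕ) (a : ℕ) : ℕ := conj f a - conj f (a + 1)

/-- `m(η) = (m_1(η), …, m_{n-1}(η))`. -/
def multVec (n : ℕ) (f : ℕ → ℕ) : Fin (n - 1) → ℕ := fun a => multOf f a.1

/-- `(q)_v = ∏ (q)_{v_a}` for a vector `v`. -/
def qpVec {k : ℕ} (v : Fin k → ℕ) : Polynomial ℚ := ∏ a, qp (v a)

/-- the partition `(1^{L 0} 2^{L 1} ⋯ k^{L (k-1)})` with `L a` parts equal to `a+1`. -/
def partOfMult {k : ℕ} (L : Fin k → ℕ) : ℕ → ℕ :=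
  conj fun j => ∑ a : Fin k, if j ≤ a.1 then L a else 0

/-- `c` parts equal to `v` followed by the parts of `f` (e.g. `(N^c) ∪ ν` sorted). -/
def prependParts (v c : ℕ) (f : ℕ → ℕ) : ℕ → ℕ := fun i => if i < c then v else f (i - c)

/-! ## Kostka numbers (as numbers of semistandard Young tableaux) -/

/-- `T : ℕ → ℕ → ℕ` is a semistandard Young tableau of shape `lam`:
entries (with `0` denoting an empty cell) weakly increase along rows and
strictly increase down columns, and the support is exactly the shape. -/
def IsSSYT (lam : ℕ → ℕ) (T : ℕ → ℕ → ℕ) : Prop :=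
  (∀ i j : ℕ, T i j ≠ 0 ↔ j < lam i) ∧
  (∀ i j k : ℕ, j ≤ k → k < lam i → T i j ≤ T i k) ∧
  (∀ i k j : ℕ, i < k → j < lam k → T i j < T k j)

/-- The Kostka number `K_{λμ}`: the number of semistandard Young tableaux of
shape `lam` and content `mu` (entry `a+1` appears `mu a` times); `0` if `lam`
is not a partition. -/
def kostkaNum (lam mu : ℕ → ℕ) : ℕ :=
  if IsPartitionF lam then
    Nat.card {T : ℕ → ℕ → ℕ //
      IsSSYT lam T ∧ ∀ a : ℕ, {p : ℕ × ℕ | T p.1 p.2 = a + 1}.ncard = mu a}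
  else 0

/-- a vector of rationals all of whose entries are nonnegative integers. -/
def IsNatVec {n : ℕ} (v : Fin n → ℚ) : Prop := ∀ i, ∃ m : ℕ, v i = m

def natVec {n : ℕ} (v : Fin n → ℚ) : ℕ → ℕ :=
  fun i => if h : i < n then (v ⟨i, h⟩).num.toNat else 0

/-- Kostka number with content given by a rational vector (`0` unless all the
entries are nonnegative integers). -/
def kostkaNumV {n : ℕ} (lam : ℕ → ℕ) (v : Fin n → ℚ) : ℕ :=
  if IsNatVec v then kostkaNum lam (natVec v) else 0

/-! ## Schur and Hall–Littlewood polynomials, and Kostka polynomials -/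

/-- ambient polynomial ring in `d` variables over `ℚ(q)`. -/
abbrev Rr (d : ℕ) := MvPolynomial (Fin d) (RatFunc ℚ)

/-- its fraction field. -/
abbrev Ell (d : ℕ) := FractionRing (Rr d)

def xv (d : ℕ) (i : Fin d) : Ell d := algebraMap (Rr d) (Ell d) (MvPolynomial.X i)

def qv (d : ℕ) : Ell d := algebraMap (Rr d) (Ell d) (MvPolynomial.C RatFunc.X)

def polyToL (d : ℕ) (P : Polynomial ℚ) : Ell d :=
  Polynomial.eval₂
    (((algebraMap (Rr d) (Ell d)).comp (MvPolynomial.C)).comp (algebraMap ℚ (RatFunc ℚ)))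
    (qv d) P

def sgnE {d : ℕ} (σ : Equiv.Perm (Fin d)) : ℤ := Equiv.Perm.sign σ

/-- one term of the Hall–Littlewood polynomial. -/
def hlTerm (d : ℕ) (lam : ℕ → ℕ) (σ : Equiv.Perm (Fin d)) : Ell d :=
  (∏ i : Fin d, xv d (σ i) ^ lam i.1) *
  ∏ p : Fin d × Fin d,
    if lam p.2.1 < lam p.1.1 then
      (xv d (σ p.1) - qv d * xv d (σ p.2)) / (xv d (σ p.1) - xv d (σ p.2))
    else 1

/-- the Hall–Littlewood polynomial
`P_λ(x₁,…,x_d;q) = ∑_{σ ∈ S_d/S_d^λ} σ(x^λ ∏_{λ_i > λ_j} (x_i - q x_j)/(x_i - x_j))`,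
realised as `1/|S_d^λ|` times the sum over the full symmetric group;
it is `0` if `l(λ) > d`. -/
def hallLittlewood (d : ℕ) (lam : ℕ → ℕ) : Ell d :=
  if lenP lam ≤ d then
    ((Nat.card {σ : Equiv.Perm (Fin d) // ∀ i : Fin d, lam (σ i).1 = lam i.1} : Ell d))⁻¹ *
      ∑ σ : Equiv.Perm (Fin d), hlTerm d lam σ
  else 0

/-- the alternant `a_f = ∑_σ ε(σ) ∏ᵢ xᵢ^{f(σ i)}`. -/
def aAlt (d : ℕ) (f : Fin d → ℕ) : Ell d :=
  ∑ σ : Equiv.Perm (Fin d), ((sgnE σ : ℤ) : Ell d) * ∏ i : Fin d, xv d i ^ f (σ i)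

def deltaV (d : ℕ) : Fin d → ℕ := fun i => d - 1 - i.1

/-- the Schur polynomial `s_λ = a_{λ+δ} / a_δ` in `d` variables. -/
def schurL (d : ℕ) (lam : ℕ → ℕ) : Ell d :=
  aAlt d (fun i => lam i.1 + deltaV d i) / aAlt d (deltaV d)

/-- `Kf` is a family of Kostka polynomials in weight `d`:
`s_λ = ∑_{μ ⊢ d} K_{λμ}(q) P_μ(x;q)` for every partition `λ ⊢ d`
(in `d` variables, which is enough variables for all `μ ⊢ d`). -/
def kostkaFamSpec (d : ℕ) (Kf : (ℕ → ℕ) → (ℕ → ℕ) → Polynomial ℚ) : Prop :=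
  ∀ lam : ℕ → ℕ, IsPartitionF lam → wt lam = d →
    schurL d lam =
      ∑ᶠ mu ∈ {mu : ℕ → ℕ | IsPartitionF mu ∧ wt mu = d},
        polyToL d (Kf lam mu) * hallLittlewood d mu

def kostkaPolyAux (d : ℕ) (lam mu : ℕ → ℕ) : Polynomial ℚ :=
  if h : ∃ Kf, kostkaFamSpec d Kf then h.choose lam mu else 0

/-- The Kostka polynomial `K_{λμ}(q)`, extended to compositions `μ` by sorting
(`K_{λ,σ(μ)}(q) = K_{λμ}(q)`), and equal to `0` in all other cases. -/
def kostkaPoly (lam mu : ℕ → ℕ) : Polynomial ℚ :=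
  if IsPartitionF lam ∧ IsCompositionF mu ∧ wt lam = wt mu then
    kostkaPolyAux (wt lam) lam (conj (conj mu))
  else 0

/-- a rational vector which is a partition (nonnegative integral, weakly decreasing). -/
def IsPartVec {n : ℕ} (v : Fin n → ℚ) : Prop :=
  IsNatVec v ∧ ∀ i j : Fin n, i ≤ j → v j ≤ v i

/-- `K_{v', mu}(q)` where `v` is a rational vector: `0` unless `v` is a partition. -/
def kostkaPolyConjV {n : ℕ} (v : Fin n → ℚ) (mu : ℕ → ℕ) : Polynomial ℚ :=
  if IsPartVec v then kostkaPoly (conj (natVec v)) mu else 0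

/-! ## Supernomial coefficients -/

/-- the completely antisymmetric A_{n-1} supernomial
`[L; λ] = ∑_{ν ⊢ |λ|} K_{νλ} K_{ν'μ}(q)` where `μ = (1^{L_1} 2^{L_2} ⋯ (n-1)^{L_{n-1}})`;
it vanishes if `λ` has a negative (or non-integral) component. -/
def supernomial (n : ℕ) (L : Fin (n - 1) → ℕ) (lam : Fin n → ℚ) : Polynomial ℚ :=
  if IsNatVec lam then
    ∑ᶠ nu ∈ {nu : ℕ → ℕ | IsPartitionF nu ∧ wt nu = wt (natVec lam)},
      (kostkaNum nu (natVec lam) : Polynomial ℚ) * kostkaPoly (conj nu) (partOfMult L)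
  else 0

/-- the completely symmetric A_{n-1} supernomial
`𝒮_{λμ}(q) = ∑_{ν ⊢ |λ|} K_{νλ} K_{νμ}(q)`. -/
def ssupernomial (lam mu : ℕ → ℕ) : Polynomial ℚ :=
  ∑ᶠ nu ∈ {nu : ℕ → ℕ | IsPartitionF nu ∧ wt nu = wt lam},
    (kostkaNum nu lam : Polynomial ℚ) * kostkaPoly nu mu

/-! ## A_{n-1} weight-space data (inside `ℚ^n`) -/

/-- the fundamental weight `Λ̄_i = ε_1 + ⋯ + ε_i - (i/n)(1,…,1)` (`Λ̄_0 = Λ̄_n = 0`). -/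
def fw (n i : ℕ) : Fin n → ℚ := fun j => (if j.1 < i then 1 else 0) - (i : ℚ) / n

/-- the Weyl vector `ρ = ((n-1)/2, (n-3)/2, …, (1-n)/2)`. -/
def rhoV (n : ℕ) : Fin n → ℚ := fun j => ((n : ℚ) - 1) / 2 - j.1

/-- the simple root `α_a = ε_a - ε_{a+1}` (`1`-indexed `a`). -/
def alphaV (n a : ℕ) : Fin n → ℚ :=
  fun i => (if i.1 + 1 = a then 1 else 0) - (if i.1 + 1 = a + 1 then 1 else 0)

/-- the standard inner product. -/
def ip {n : ℕ} (u v : Fin n → ℚ) : ℚ := ∑ i, u i * v i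

/-- membership in the root lattice `Q`. -/
def inQl {n : ℕ} (v : Fin n → ℚ) : Prop :=
  (∀ i, ∃ z : ℤ, v i = z) ∧ ∑ i, v i = 0

/-- membership in the weight lattice `P`. -/
def inPl {n : ℕ} (v : Fin n → ℚ) : Prop :=
  (∀ i, ∃ z : ℤ, v i * n = z) ∧ (∑ i, v i = 0) ∧
    ∀ i j : Fin n, i.1 + 1 = j.1 → ∃ z : ℤ, v i - v j = z

/-- dominance: weakly decreasing entries. -/
def dominantV {n : ℕ} (v : Fin n → ℚ) : Prop := ∀ i j : Fin n, i ≤ j → v j ≤ v i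

/-- the action `σ(k) = (k_{σ(1)}, …, k_{σ(n)})`. -/
def permV {n : ℕ} (σ : Equiv.Perm (Fin n)) (v : Fin n → ℚ) : Fin n → ℚ := fun i => v (σ i)

def sgn {n : ℕ} (σ : Equiv.Perm (Fin n)) : ℚ := ((Equiv.Perm.sign σ : ℤ) : ℚ)

/-- the longest element (reversal) of `S_n`. -/
def revP (n : ℕ) : Equiv.Perm (Fin n) := ⟨Fin.rev, Fin.rev, Fin.rev_rev, Fin.rev_rev⟩

/-! ## The fermionic series `F_{ην}(q)` and `C_{μν}(q)` at integer level `N` -/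

abbrev MIdx (n N : ℕ) := Fin (n - 1) × Fin (N - 1)

/-- the A Cartan matrix `C_{a,b}` (`1`-indexed). -/
def cartan (a b : ℕ) : ℚ := if a = b then 2 else if a + 1 = b ∨ b + 1 = a then -1 else 0

/-- the inverse A_{N-1} Cartan matrix `C̄⁻¹_{j,k} = min(j,k) - jk/N`
(also used for the boundary indices `0` and `N`, where it vanishes). -/
def cbarInv (N j k : ℕ) : ℚ := (min j k : ℚ) - (j : ℚ) * k / N

/-- `½ m (C ⊗ C̄⁻¹) m`. -/
def quadF (n N : ℕ) (m : MIdx n N → ℕ) : ℚ :=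
  (1 / 2) * ∑ v : MIdx n N, ∑ w : MIdx n N,
    (m v : ℚ) * cartan (v.1.1 + 1) (w.1.1 + 1) * cbarInv N (v.2.1 + 1) (w.2.1 + 1) * (m w : ℚ)

/-- `∑_{i=1}^{l(ν)} (e_1 ⊗ ē_{N-ν_i}) (I ⊗ C̄⁻¹) m`. -/
def linF (n N : ℕ) (nu : ℕ → ℕ) (m : MIdx n N → ℕ) : ℚ :=
  ∑ᶠ i ∈ Function.support nu, ∑ v : MIdx n N,
    (if v.1.1 = 0 then (1 : ℚ) else 0) * cbarInv N (N - nu i) (v.2.1 + 1) * (m v : ℚ)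

/-- the restriction `∑_{a,j} j m_j^{(a)} α_a ∈ N·Q + μ₀ - |ν| Λ̄_1`. -/
def restrF (n N : ℕ) (mu0 : Fin n → ℚ) (nuwt : ℕ) (m : MIdx n N → ℕ) : Prop :=
  ∃ w : Fin n → ℚ, inQl w ∧
    ∀ i : Fin n,
      (∑ v : MIdx n N, ((v.2.1 + 1 : ℕ) : ℚ) * (m v : ℚ) * alphaV n (v.1.1 + 1) i)
        = N * w i + mu0 i - (nuwt : ℚ) * fw n 1 i

/-- the vector `p` determined by
`(C ⊗ Ī) m + (I ⊗ C̄) p = (m(η) ⊗ ē_1) + ∑_{i=1}^{l(ν)} (e_1 ⊗ ē_{N-ν_i})`. -/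
def pvec (n N : ℕ) (eta nu : ℕ → ℕ) (m : MIdx n N → ℕ) : MIdx n N → ℚ :=
  fun v => ∑ k : Fin (N - 1), cbarInv N (v.2.1 + 1) (k.1 + 1) *
    ((if k.1 = 0 then (multVec n eta v.1 : ℚ) else 0) +
     (if v.1.1 = 0 then ({i : ℕ | nu i ≠ 0 ∧ N - nu i = k.1 + 1}.ncard : ℚ) else 0) -
     ∑ b : Fin (n - 1), cartan (v.1.1 + 1) (b.1 + 1) * (m (b, k) : ℚ))

/-- `[m + p; m]_q` where `p` may a priori be rational (it vanishes unless `p`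
is a nonnegative integer). -/
def qbinShift (mv : ℕ) (pv : ℚ) : Polynomial ℚ :=
  if pv.den = 1 ∧ 0 ≤ pv.num then qbin (mv + pv.num.toNat) mv else 0

/-- `μ(η) = ∑_a m_a(η) Λ̄_a`. -/
def muOf (n : ℕ) (eta : ℕ → ℕ) : Fin n → ℚ :=
  fun i => ∑ a : Fin (n - 1), (multVec n eta a : ℚ) * fw n (a.1 + 1) i

/-- the exponent prefactor `n(ν) - (n-1)|ν|²/(2nN) + ⟨μ,μ⟩/(2N)`. -/
def preF (n N : ℕ) (mu0 : Fin n → ℚ) (nu : ℕ → ℕ) : ℚ :=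
  (nstat nu : ℚ) - ((n : ℚ) - 1) * (wt nu : ℚ) ^ 2 / (2 * n * N) + ip mu0 mu0 / (2 * N)

/-- the polynomial `F_{ην}(q)` (for `N = 0`: `F_{η,∅} = δ_{η,∅}`). -/
def FF (n N : ℕ) (eta nu : ℕ → ℕ) : CF :=
  if N = 0 then (fun r => if (∀ i, eta i = 0) ∧ r = 0 then 1 else 0)
  else
    cfSum (fun m : {m : MIdx n N → ℕ // restrF n N (muOf n eta) (wt nu) m} => fun r =>
      coeffAt (∏ v : MIdx n N, qbinShift (m.1 v) (pvec n N eta nu m.1 v))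
        (r - (preF n N (muOf n eta) nu + quadF n N m.1 - linF n N nu m.1)))

/-- the series `C_{μν}(q)` (for `N = 0`: `C_{μ,∅} = δ_{μ,∅}`). -/
def CC (n N : ℕ) (mu0 : Fin n → ℚ) (nu : ℕ → ℕ) : CF :=
  if N = 0 then (fun r => if mu0 = 0 ∧ r = 0 then 1 else 0)
  else
    cfSum (fun m : {m : MIdx n N → ℕ // restrF n N mu0 (wt nu) m} => fun r =>
      coeffAtPS ((qpInf ^ (n - 1))⁻¹ * ∏ v : MIdx n N, (polyPS (qp (m.1 v)))⁻¹)
        (r - (preF n N mu0 nu + quadF n N m.1 - linF n N nu m.1)))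

/-! ## A_{n-1} (conjugate) Bailey pairs -/

/-- the factor `(q)_{m(η)}⁻¹ · [m(η); (|η|/n)(1,…,1) - k - ℓ Λ̄_{n-1}]`
as a power series in `q`. -/
def bpPS (n ℓ : ℕ) (k : Fin n → ℚ) (eta : ℕ → ℕ) : PowerSeries ℚ :=
  (polyPS (qpVec (multVec n eta)))⁻¹ *
    polyPS (supernomial n (multVec n eta)
      (fun i => (wt eta : ℚ) / n - k i - (ℓ : ℚ) * fw n (n - 1) i))

/-- `(α, β)` is an A_{n-1} Bailey pair relative to `q^ℓ`. -/
def IsBaileyPair (n ℓ : ℕ) (hn : 0 < n)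
    (α : (Fin n → ℚ) → CF) (β : (ℕ → ℕ) → CF) : Prop :=
  ∀ eta : ℕ → ℕ, IsPartitionF eta → eta 0 ≤ n - 1 → wt eta % n = ℓ % n →
    β eta = cfSum (fun k : {k : Fin n → ℚ // inQl k ∧ dominantV k ∧
        (n : ℚ) * k ⟨0, hn⟩ ≤ (wt eta : ℚ) - ℓ} =>
      cfMulPS (α k.1) (bpPS n ℓ k.1 eta))

/-- `(γ, δ)` is an A_{n-1} conjugate Bailey pair relative to `q^ℓ`:
for every `k ∈ Q ∩ P_+`,
`γ_k = ∑_η δ_η/(q)_{m(η)} · [m(η); (|η|/n)(1,…,1) - k - ℓΛ̄_{n-1}]`,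
the sum over partitions `η` with `η_1 ≤ n-1`, `|η| ≡ ℓ (mod n)`,
`|η| ≥ ℓ + n k_1`, coefficientwise. -/
def IsConjBaileyPair (n ℓ : ℕ) (hn : 0 < n)
    (γ : (Fin n → ℚ) → CF) (δ : (ℕ → ℕ) → CF) : Prop :=
  ∀ k : Fin n → ℚ, inQl k → dominantV k →
    γ k = cfSum (fun eta : {eta : ℕ → ℕ // IsPartitionF eta ∧ eta 0 ≤ n - 1 ∧
        (ℓ : ℚ) + n * k ⟨0, hn⟩ ≤ (wt eta : ℚ) ∧ wt eta % n = ℓ % n} =>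
      cfMulPS (δ eta.1) (bpPS n ℓ k eta.1))

/-! ## Configuration sums `X_{η,Λ,Λ'}` at (possibly fractional) level -/

/-- one term of the configuration sum: `σ ∈ S_n` and `k = p'·w + σ(Λ̄+ρ)`, `w ∈ Q`. -/
def Xterm (n p' : ℕ) (Nl : ℚ) (eta : ℕ → ℕ) (Lb Lb' : Fin n → ℚ)
    (σ : Equiv.Perm (Fin n)) (w : Fin n → ℚ) : CF :=
  fun r =>
    let kv : Fin n → ℚ := fun i => (p' : ℚ) * w i + (Lb (σ i) + rhoV n (σ i))
    sgn σ * coeffAt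
      (supernomial n (multVec n eta)
        (fun i => (wt eta : ℚ) / n + kv i - Lb' i - rhoV n i))
      (r - (ip kv kv / (2 * ((n : ℚ) + Nl)) -
            ip (fun j => Lb j + rhoV n j) (fun j => Lb j + rhoV n j) / (2 * ((n : ℚ) + Nl))))

/-- the configuration sum `X_{η,Λ,Λ'}(q)`, with classical parts `Lb = Λ̄`,
`Lb' = Λ̄'`, at level `Nl = p'/p - n`; it vanishes if
`|η|Λ̄_1 - Λ̄ + Λ̄' ∉ Q`. -/
def Xconf (n p' : ℕ) (Nl : ℚ) (eta : ℕ → ℕ) (Lb Lb' : Fin n → ℚ) : CF :=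
  if inQl (fun i => (wt eta : ℚ) * fw n 1 i - Lb i + Lb' i) then
    cfSum (fun sw : Equiv.Perm (Fin n) × {w : Fin n → ℚ // inQl w} =>
      Xterm n p' Nl eta Lb Lb' sw.1 sw.2.1)
  else 0

/-! ## The sets `P^{(p,p')}` of (admissible) weights -/

/-- `a : Fin n → ℚ` records the coefficients of `Λ = ∑ a_i Λ_i`;
`Λ ∈ P^{(p,p')}` iff `a_i ∈ ℤ_+` for `i ≥ 1`, `∑_{i≥1} a_i ≤ p' - n` and
`∑_i a_i = p'/p - n`. -/
def inPpp (n p p' : ℕ) (a : Fin n → ℚ) : Prop :=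
  (∀ i : Fin n, i.1 ≠ 0 → ∃ z : ℕ, a i = z) ∧
  (∑ i ∈ Finset.univ.filter (fun i : Fin n => i.1 ≠ 0), a i) ≤ (p' : ℚ) - n ∧
  (∑ i, a i) = (p' : ℚ) / p - (n : ℚ)

/-- the classical part `Λ̄ = ∑ a_i Λ̄_i`. -/
def clsOf (n : ℕ) (a : Fin n → ℚ) : Fin n → ℚ := fun j => ∑ i : Fin n, a i * fw n i.1 j

/-- the complement `Λ^c = ∑ a_i Λ_{n-i}`, on coefficient vectors. -/
def compA {n : ℕ} (a : Fin n → ℚ) : Fin n → ℚ :=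
  fun j => a ⟨(n - j.1) % n, Nat.mod_lt _ (by have := j.2; omega)⟩

/-- the complement `η^c` of a partition with all parts `≤ n-1`:
the multiplicities `ζ_a = m_a(η)` get reversed. -/
def etaCompl (n : ℕ) (eta : ℕ → ℕ) : ℕ → ℕ :=
  partOfMult (fun a : Fin (n - 1) => multVec n eta ⟨n - 2 - a.1, by have := a.2; omega⟩)

/-- `m̄_Λ = ‖Λ̄+ρ‖²/(2(n+N))`. -/
def mbarOf (n : ℕ) (Nl : ℚ) (Lb : Fin n → ℚ) : ℚ :=
  ip (fun j => Lb j + rhoV n j) (fun j => Lb j + rhoV n j) / (2 * ((n : ℚ) + Nl))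

/-- the modular anomaly `m_Λ = ‖Λ̄+ρ‖²/(2(n+N)) - ‖ρ‖²/(2n)`. -/
def mAnom (n : ℕ) (Nl : ℚ) (Lb : Fin n → ℚ) : ℚ :=
  mbarOf n Nl Lb - ip (rhoV n) (rhoV n) / (2 * (n : ℚ))

/-! ## String functions at (possibly fractional) level -/

/-- two-variable coefficient functions: `f v r` = coefficient of `x^v q^r`. -/
abbrev CF2 (n : ℕ) : Type := (Fin n → ℚ) → ℚ → ℚ

/-- the classical theta function `Θ_{λ,m}(x;q^{scale})`. -/
def thetaCF2 (n : ℕ) (lam : Fin n → ℚ) (md scale : ℚ) : CF2 n :=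
  fun v r =>
    if (∃ w, inQl w ∧ ∀ i, v i = md * w i + lam i) ∧ r = scale * ip v v / (2 * md) then 1
    else 0

/-- the numerator `∑_σ ε(σ) Θ_{σ(Λ̄+ρ),p'}(x;q^p)` of the (Kac–Wakimoto)
character formula. -/
def numerKW (n p p' : ℕ) (Lb : Fin n → ℚ) : CF2 n :=
  fun v r => ∑ σ : Equiv.Perm (Fin n),
    sgn σ * thetaCF2 n (permV σ (fun j => Lb j + rhoV n j)) (p' : ℚ) (p : ℚ) v r

/-- the denominator `∑_σ ε(σ) Θ_{σ(ρ),n}(x;q)`. -/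
def denomKW (n : ℕ) : CF2 n :=
  fun v r => ∑ σ : Equiv.Perm (Fin n), sgn σ * thetaCF2 n (permV σ (rhoV n)) (n : ℚ) 1 v r

/-- convolution product of two-variable coefficient functions. -/
def mul2 {n : ℕ} (f g : CF2 n) : CF2 n :=
  fun v r => ∑ᶠ ws : (Fin n → ℚ) × ℚ, f ws.1 ws.2 * g (fun i => v i - ws.1 i) (r - ws.2)

/-- `Cfam` is the family of string functions `C_{μ,Λ}(q)` of
`Λ ∈ P^{(p,p')}` with classical part `Lb`:
`χ_Λ(x;q) = ∑_{μ ∈ P} q^{⟨μ,μ⟩/(2N)} C_{μ,Λ}(q) x^μ` where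
`χ_Λ = numer/denom`, i.e. `numer = denom · (∑ _μ …)`, the product being a
locally finite (coefficientwise) convolution. -/
def StringSpec (n p p' : ℕ) (Lb : Fin n → ℚ) (Cfam : (Fin n → ℚ) → CF) : Prop :=
  (∀ μ : Fin n → ℚ, ¬ inPl μ → Cfam μ = 0) ∧
  (∀ μ : Fin n → ℚ, ∃ r0 : ℚ, ∀ r < r0, Cfam μ r = 0) ∧
  (∀ v : Fin n → ℚ, ∀ r : ℚ,
    (Function.support fun ws : (Fin n → ℚ) × ℚ =>
      denomKW n ws.1 ws.2 *
        (if inPl (fun i => v i - ws.1 i) then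
          Cfam (fun i => v i - ws.1 i)
            ((r - ws.2) - ip (fun i => v i - ws.1 i) (fun i => v i - ws.1 i) /
              (2 * ((p' : ℚ) / p - n)))
        else 0)).Finite) ∧
  numerKW n p p' Lb =
    mul2 (denomKW n)
      (fun u s => if inPl u then Cfam u (s - ip u u / (2 * ((p' : ℚ) / p - n))) else 0)

/-- the string functions `C_{μ,Λ}(q)`, defined by the expansion of the
(Kac–Wakimoto) character in theta functions. -/
def stringC (n p p' : ℕ) (Lb : Fin n → ℚ) : (Fin n → ℚ) → CF :=
  if h : ∃ Cfam, StringSpec n p p' Lb Cfam then h.choose else fun _ => 0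

/-- the normalized string function `𝒞_{μ,Λ}(q) = q^{⟨μ,μ⟩/(2N) - m_Λ} C_{μ,Λ}(q)`. -/
def stringNorm (n p p' : ℕ) (Lb : Fin n → ℚ) (μ : Fin n → ℚ) : CF :=
  fun r =>
    stringC n p p' Lb μ
      (r - (ip μ μ / (2 * ((p' : ℚ) / p - n)) - mAnom n ((p' : ℚ) / p - n) Lb))

/-! ## Terms for Conjecture 1 and the orthogonality relation -/

/-- `λ = n·w + σ(ρ) - ρ`. -/
def lamShift (n : ℕ) (σ : Equiv.Perm (Fin n)) (w : Fin n → ℚ) : Fin n → ℚ :=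
  fun i => (n : ℚ) * w i + rhoV n (σ i) - rhoV n i

/-- one term of the sum in Conjecture 1: indexed by a partition `eta`
(`η_1 ≤ n-1`, `|η| ≡ |μ| (mod n)`), `σ ∈ S_n` and `λ ∈ nQ + σ(ρ) - ρ`. -/
def conj1Term (n : ℕ) (mu : ℕ → ℕ) (nuv : Fin n → ℤ) (eta : ℕ → ℕ)
    (σ : Equiv.Perm (Fin n)) (w : Fin n → ℚ) : CF :=
  fun r =>
    sgn σ * coeffAtPS
      ((polyPS (qpVec (multVec n eta)))⁻¹ *
        polyPS (supernomial n (multVec n eta)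
          (fun i => ((wt eta : ℚ) - ∑ j, (nuv j : ℚ)) / n + (nuv i : ℚ))) *
        polyPS (supernomial n (multVec n eta)
          (fun i => ((wt eta : ℚ) - (wt mu : ℚ)) / n + (mu i.1 : ℚ) - lamShift n σ w i)))
      (r - ip (lamShift n σ w) (fun i => lamShift n σ w i + 2 * rhoV n i) / (2 * n))

/-- Conjecture 1: for `μ` a partition with `l(μ) ≤ n` and `ν ∈ ℤ^n` with
`|μ| = |ν|`,
`K_{μν} = ∑_{η,σ,λ} ε(σ) q^{⟨λ,λ+2ρ⟩/(2n)} (q)_{m(η)}⁻¹ ·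
[m(η); ((|η|-|ν|)/n)(1,…,1)+ν] · [m(η); ((|η|-|μ|)/n)(1,…,1)+μ-λ]`. -/
def Conjecture1 (n : ℕ) : Prop :=
  ∀ mu : ℕ → ℕ, IsPartitionF mu → lenP mu ≤ n →
  ∀ nuv : Fin n → ℤ, (∑ j, nuv j) = (wt mu : ℤ) →
    (fun r : ℚ => if r = 0 then (kostkaNumV mu (fun i => (nuv i : ℚ)) : ℚ) else 0) =
      cfSum (fun t : {eta : ℕ → ℕ // IsPartitionF eta ∧ eta 0 ≤ n - 1 ∧
            wt eta % n = wt mu % n} ×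
          Equiv.Perm (Fin n) × {w : Fin n → ℚ // inQl w} =>
        conj1Term n mu nuv t.1.1 t.2.1 t.2.2.1)

/-- one term of the orthogonality sum (Corollary 1): indexed by `eta`, `σ`, and
`λ = n·w + σ(ρ) - ρ` with `w ∈ Q`. -/
def orthoTerm (n : ℕ) (mu nu : ℕ → ℕ) (eta : ℕ → ℕ)
    (σ : Equiv.Perm (Fin n)) (w : Fin n → ℚ) : CF :=
  fun r =>
    sgn σ * coeffAtPS
      ((polyPS (qpVec (multVec n eta)))⁻¹ *
        polyPS (kostkaPolyConjV
          (fun i : Fin n => ((wt eta : ℚ) - (wt nu : ℚ)) / n + (nu i.1 : ℚ)) eta) *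
        polyPS (supernomial n (multVec n eta)
          (fun i => ((wt eta : ℚ) - (wt mu : ℚ)) / n + (mu i.1 : ℚ) - lamShift n σ w i)))
      (r - ip (lamShift n σ w) (fun i => lamShift n σ w i + 2 * rhoV n i) / (2 * n))

/-- the orthogonality relation of Corollary 1 for partitions `μ, ν`:
`∑_{η,σ,λ} ε(σ) q^{⟨λ,λ+2ρ⟩/(2n)} K_{(((|η|-|ν|)/n)(1,…,1)+ν)',η}(q)/(q)_{m(η)} ·
[m(η); ((|η|-|μ|)/n)(1,…,1)+μ-λ] = δ_{μ,ν}`. -/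
def OrthoRel (n : ℕ) (mu nu : ℕ → ℕ) : Prop :=
  cfSum (fun t : {eta : ℕ → ℕ // IsPartitionF eta ∧ eta 0 ≤ n - 1 ∧
        wt eta % n = wt mu % n} ×
      Equiv.Perm (Fin n) × {w : Fin n → ℚ // inQl w} =>
    orthoTerm n mu nu t.1.1 t.2.1 t.2.2.1) =
  fun r : ℚ => if mu = nu ∧ r = 0 then 1 else 0

/-! ### Auxiliary lemmas for Statement 11 -/

lemma conj_zeroF : conj (fun _ => (0:ℕ)) = fun _ => 0 := by
  funext a; simp [conj]

lemma isPartitionF_zero : IsPartitionF (fun _ => (0:ℕ)) :=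
  ⟨fun _ _ _ => le_rfl, by simp [Function.support]⟩

lemma wt_zeroF : wt (fun _ => (0:ℕ)) = 0 := by
  simp [wt]

lemma wt_eq_zero_iff {f : ℕ → ℕ} (hf : (Function.support f).Finite) :
    wt f = 0 ↔ ∀ i, f i = 0 := by
  rw [wt, finsum_eq_sum f hf]
  constructor
  · intro h i
    by_cases hi : f i = 0
    · exact hi
    · exact (Finset.sum_eq_zero_iff.mp h i (hf.mem_toFinset.mpr hi))
  · intro h
    exact Finset.sum_eq_zero fun i _ => h i

lemma eq_zero_of_part_wt {f : ℕ → ℕ} (hp : IsPartitionF f) (h : wt f = 0) :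
    f = fun _ => 0 :=
  funext fun i => (wt_eq_zero_iff hp.2).mp h i

lemma part_set_zero : {nu : ℕ → ℕ | IsPartitionF nu ∧ wt nu = 0} = {fun _ => 0} := by
  ext nu
  simp only [Set.mem_setOf_eq, Set.mem_singleton_iff]
  constructor
  · rintro ⟨h1, h2⟩; exact eq_zero_of_part_wt h1 h2
  · rintro rfl; exact ⟨isPartitionF_zero, wt_zeroF⟩

lemma wt_ne_zero {f : ℕ → ℕ} (hf : (Function.support f).Finite) (i : ℕ) (hi : f i ≠ 0) :
    wt f ≠ 0 :=
  fun h => hi ((wt_eq_zero_iff hf).mp h i)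

lemma multVec_zeroEta (n : ℕ) : multVec n (fun _ => 0) = fun _ => 0 := by
  funext a; simp [multVec, multOf, conj_zeroF]

lemma partOfMult_zeroL (n : ℕ) : partOfMult (fun _ : Fin (n-1) => (0:ℕ)) = fun _ => 0 := by
  have : (fun j : ℕ => ∑ a : Fin (n-1), if j ≤ a.1 then (0:ℕ) else 0) = fun _ => 0 := by
    funext j; simp
  rw [partOfMult, this, conj_zeroF]

lemma natVec_zeroV (n : ℕ) : natVec (0 : Fin n → ℚ) = fun _ => 0 := by
  funext i; simp [natVec]

lemma kostkaNum_zero_zero : kostkaNum (fun _ => 0) (fun _ => 0) = 1 := by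
  rw [kostkaNum, if_pos isPartitionF_zero]
  rw [Nat.card_eq_one_iff_unique]
  constructor
  · constructor
    rintro ⟨T, hT, -⟩ ⟨T', hT', -⟩
    have h1 : ∀ i j, T i j = 0 := by
      intro i j
      by_contra h
      exact Nat.not_lt_zero j ((hT.1 i j).mp h)
    have h2 : ∀ i j, T' i j = 0 := by
      intro i j
      by_contra h
      exact Nat.not_lt_zero j ((hT'.1 i j).mp h)
    apply Subtype.ext
    show T = T'
    funext i j
    rw [h1, h2]
  · refine ⟨⟨fun _ _ => 0, ⟨?_, ?_, ?_⟩, ?_⟩⟩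
    · intro i j; simp
    · intro i j k _ h; exact absurd h (Nat.not_lt_zero k)
    · intro i k j _ h; exact absurd h (Nat.not_lt_zero j)
    · intro a
      have : {p : ℕ × ℕ | (0:ℕ) = a + 1} = ∅ := by
        ext p; simp
      rw [this, Set.ncard_empty]

instance perm0Unique : Unique (Equiv.Perm (Fin 0)) :=
  ⟨⟨1⟩, fun σ => Equiv.ext fun i => i.elim0⟩

lemma aAlt_zeroVars (f : Fin 0 → ℕ) : aAlt 0 f = 1 := by
  rw [aAlt, Finset.univ_unique, Finset.sum_singleton]
  have h1 : (default : Equiv.Perm (Fin 0)) = 1 := rfl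
  simp [h1, sgnE]

lemma schurL_zeroVars (lam : ℕ → ℕ) : schurL 0 lam = 1 := by
  rw [schurL, aAlt_zeroVars, aAlt_zeroVars, div_one]

lemma hlTerm_zeroVars (lam : ℕ → ℕ) (σ : Equiv.Perm (Fin 0)) : hlTerm 0 lam σ = 1 := by
  rw [hlTerm]
  simp

lemma lenP_zeroF : lenP (fun _ => (0:ℕ)) = 0 := by
  simp [lenP, Function.support]

lemma hallLittlewood_zeroVars : hallLittlewood 0 (fun _ => 0) = 1 := by
  rw [hallLittlewood, if_pos (by rw [lenP_zeroF])]
  have hcard : Nat.card {σ : Equiv.Perm (Fin 0) // ∀ i : Fin 0, (fun _ => 0) (σ i).1 = (fun _ => 0) i.1} = 1 := by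
    rw [Nat.card_eq_one_iff_unique]
    exact ⟨⟨fun x y => Subtype.ext (Subsingleton.elim x.1 y.1)⟩, ⟨1, fun i => i.elim0⟩⟩
  rw [hcard, Finset.univ_unique, Finset.sum_singleton, hlTerm_zeroVars]
  simp

lemma polyToL_one : polyToL 0 1 = 1 := by
  rw [polyToL, Polynomial.eval₂_one]

lemma polyToL_zeroVars_injective : Function.Injective (polyToL 0) := by
  set g : Polynomial ℚ →+* Ell 0 :=
    ((algebraMap (Rr 0) (Ell 0)).comp (MvPolynomial.C : RatFunc ℚ →+* Rr 0)).comp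
      (algebraMap (Polynomial ℚ) (RatFunc ℚ)) with hg
  have hgi : Function.Injective g := by
    exact (IsFractionRing.injective (Rr 0) (Ell 0)).comp
      ((MvPolynomial.C_injective (Fin 0) (RatFunc ℚ)).comp
        (IsFractionRing.injective (Polynomial ℚ) (RatFunc ℚ)))
  have key : ∀ P, polyToL 0 P = g P := by
    intro P
    have h2 : (Polynomial.eval₂RingHom
        ((((algebraMap (Rr 0) (Ell 0)).comp (MvPolynomial.C)).comp
          (algebraMap ℚ (RatFunc ℚ)))) (qv 0)) = g := by
      apply Polynomial.ringHom_ext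
      · intro c
        simp only [Polynomial.coe_eval₂RingHom, Polynomial.eval₂_C, hg, RingHom.comp_apply,
          RatFunc.algebraMap_C, RatFunc.algebraMap_eq_C]
        exact congrArg _ (congrArg _ (RingHom.congr_fun (Subsingleton.elim _ _) c))
      · simp [hg, RatFunc.algebraMap_X, qv]
    rw [polyToL, ← h2]
    rfl
  intro P Q h
  apply hgi
  rw [← key, ← key]
  exact h

lemma exists_kostkaFam0 : ∃ Kf, kostkaFamSpec 0 Kf := by
  refine ⟨fun _ _ => 1, ?_⟩
  intro lam hlam hwt
  rw [part_set_zero, finsum_mem_singleton, schurL_zeroVars, polyToL_one,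
    hallLittlewood_zeroVars, one_mul]

lemma kostkaPoly_zero_zero : kostkaPoly (fun _ => 0) (fun _ => 0) = 1 := by
  rw [kostkaPoly, if_pos ⟨isPartitionF_zero, isPartitionF_zero.2, rfl⟩]
  rw [wt_zeroF, conj_zeroF, conj_zeroF]
  rw [kostkaPolyAux, dif_pos exists_kostkaFam0]
  have h1 := exists_kostkaFam0.choose_spec (fun _ => 0) isPartitionF_zero wt_zeroF
  rw [part_set_zero, finsum_mem_singleton, schurL_zeroVars, hallLittlewood_zeroVars,
    mul_one] at h1
  apply polyToL_zeroVars_injective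
  rw [polyToL_one, ← h1]

lemma supernomial_zeroEta (n : ℕ) (v : Fin n → ℚ) :
    supernomial n (multVec n (fun _ => 0)) v = if v = 0 then 1 else 0 := by
  rw [multVec_zeroEta]
  by_cases hv : v = 0
  · subst hv
    rw [if_pos rfl, supernomial]
    have hnat0 : IsNatVec (0 : Fin n → ℚ) := fun i => ⟨0, by simp⟩
    rw [if_pos hnat0]
    rw [natVec_zeroV, wt_zeroF, part_set_zero, finsum_mem_singleton]
    rw [kostkaNum_zero_zero, conj_zeroF, partOfMult_zeroL, kostkaPoly_zero_zero]
    norm_num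
  · rw [if_neg hv, supernomial]
    split_ifs with hnat
    · apply finsum_mem_of_eqOn_zero
      intro nu hnu
      obtain ⟨hnup, hnuw⟩ := hnu
      -- `v ≠ 0`, so `natVec v` is not identically zero
      obtain ⟨i0, hi0⟩ : ∃ i : Fin n, v i ≠ 0 := by
        by_contra h
        push_neg at h
        exact hv (funext h)
      have hnv : natVec v i0.1 ≠ 0 := by
        obtain ⟨m, hm⟩ := hnat i0
        rw [natVec, dif_pos i0.2]
        have : (⟨i0.1, i0.2⟩ : Fin n) = i0 := rfl
        rw [this, hm]
        simpa [hm] using hi0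
      have hfin : (Function.support (natVec v)).Finite := by
        apply Set.Finite.subset (Set.finite_Iio n)
        intro i hi
        rw [Function.mem_support] at hi
        by_contra hlt
        rw [natVec, dif_neg (by simpa using hlt)] at hi
        exact hi rfl
      have hwv : wt (natVec v) ≠ 0 := wt_ne_zero hfin i0.1 hnv
      -- so `nu` is a nonzero partition, hence `conj nu` has nonzero weight
      have hnu0 : nu 0 ≠ 0 := by
        intro h0
        apply hwv
        rw [← hnuw]
        rw [wt_eq_zero_iff hnup.2]
        intro i
        exact Nat.le_zero.mp (h0 ▸ hnup.1 0 i (Nat.zero_le i))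
      have hconjfin : (Function.support (conj nu)).Finite := by
        apply Set.Finite.subset (Set.finite_Iio (nu 0))
        intro a ha
        rw [Function.mem_support] at ha
        simp only [Set.mem_Iio]
        by_contra hlt
        push_neg at hlt
        apply ha
        rw [conj]
        convert Set.ncard_empty ℕ
        ext i
        simp only [Set.mem_setOf_eq, Set.mem_empty_iff_false, iff_false, not_lt]
        exact le_trans (hnup.1 0 i (Nat.zero_le i)) hlt
      have hconj0 : conj nu 0 ≠ 0 := by
        rw [conj]
        have hne : {i : ℕ | 0 < nu i}.Nonempty := ⟨0, Nat.pos_of_ne_zero hnu0⟩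
        have hfin2 : {i : ℕ | 0 < nu i}.Finite := by
          apply Set.Finite.subset hnup.2
          intro i hi
          exact hi.ne'
        exact ((Set.ncard_pos hfin2).mpr hne).ne'
      have hK : kostkaPoly (conj nu) (partOfMult (fun _ : Fin (n-1) => 0)) = 0 := by
        rw [partOfMult_zeroL, kostkaPoly, if_neg]
        rintro ⟨-, -, hweq⟩
        rw [wt_zeroF] at hweq
        exact wt_ne_zero hconjfin 0 hconj0 hweq
      exact mul_eq_zero_of_right _ hK
    · rfl

lemma coeffAt_zeroP (r : ℚ) : coeffAt 0 r = 0 := by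
  simp [coeffAt]

lemma coeffAt_one (r : ℚ) : coeffAt 1 r = if r = 0 then 1 else 0 := by
  rw [coeffAt]
  by_cases h : r = 0
  · subst h
    norm_num [Polynomial.coeff_one]
  · rw [if_neg h]
    split_ifs with hc
    · rw [Polynomial.coeff_one, if_neg]
      intro h0
      apply h
      have : r.num = 0 := by omega
      exact Rat.num_eq_zero.mp this
    · rfl

lemma clsOf_rho_diff (n : ℕ) (a : Fin n → ℚ) (j k : Fin n) (hjk : j.1 ≤ k.1) :
    (clsOf n a j + rhoV n j) - (clsOf n a k + rhoV n k) =
      (∑ i : Fin n, if j.1 < i.1 ∧ i.1 ≤ k.1 then a i else 0) + ((k.1 : ℚ) - (j.1 : ℚ)) := by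
  have key : ∀ i : Fin n,
      a i * fw n i.1 j - a i * fw n i.1 k
        = if j.1 < i.1 ∧ i.1 ≤ k.1 then a i else 0 := by
    intro i
    simp only [fw]
    by_cases h1 : j.1 < i.1
    · by_cases h2 : i.1 ≤ k.1
      · simp only [if_pos h1, if_pos (And.intro h1 h2),
          if_neg (show ¬ (k.1 < i.1) by omega)]
        ring
      · simp only [if_pos h1, if_pos (show k.1 < i.1 by omega),
          if_neg (show ¬ (j.1 < i.1 ∧ i.1 ≤ k.1) from fun hc => h2 hc.2)]
        ring
    · simp only [if_neg h1, if_neg (show ¬ (k.1 < i.1) by omega),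
        if_neg (show ¬ (j.1 < i.1 ∧ i.1 ≤ k.1) from fun hc => h1 hc.1)]
      ring
  have hsum : clsOf n a j - clsOf n a k
      = ∑ i : Fin n, if j.1 < i.1 ∧ i.1 ≤ k.1 then a i else 0 := by
    rw [clsOf, clsOf, ← Finset.sum_sub_distrib]
    exact Finset.sum_congr rfl fun i _ => key i
  have hrho : rhoV n j - rhoV n k = (k.1:ℚ) - (j.1:ℚ) := by
    simp only [rhoV]; ring
  linarith

lemma b_bounds {n p p' : ℕ} {a : Fin n → ℚ} (ha : inPpp n p p' a)
    (j k : Fin n) (hjk : j.1 ≤ k.1) :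
    ((k.1:ℚ) - j.1) ≤ (clsOf n a j + rhoV n j) - (clsOf n a k + rhoV n k) ∧
    (clsOf n a j + rhoV n j) - (clsOf n a k + rhoV n k) ≤ ((p':ℚ) - n) + ((k.1:ℚ) - j.1) := by
  rw [clsOf_rho_diff n a j k hjk]
  have hnn : ∀ i : Fin n, i.1 ≠ 0 → 0 ≤ a i := by
    intro i hi
    obtain ⟨z, hz⟩ := ha.1 i hi
    rw [hz]
    positivity
  constructor
  · have h0 : 0 ≤ ∑ i : Fin n, if j.1 < i.1 ∧ i.1 ≤ k.1 then a i else 0 := by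
      apply Finset.sum_nonneg
      intro i _
      split_ifs with hc
      · exact hnn i (by omega)
      · exact le_rfl
    linarith
  · have h1 : (∑ i : Fin n, if j.1 < i.1 ∧ i.1 ≤ k.1 then a i else 0)
        ≤ ∑ i ∈ Finset.univ.filter (fun i : Fin n => i.1 ≠ 0), a i := by
      rw [← Finset.sum_filter]
      apply Finset.sum_le_sum_of_subset_of_nonneg
      · intro i hi
        simp only [Finset.mem_filter, Finset.mem_univ, true_and] at hi ⊢
        omega
      · intro i hi _
        apply hnn
        simpa using hi
    have h2 := ha.2.1
    linarith

lemma unique_sol {n p p' : ℕ} (hn : 2 ≤ n) (hp' : n ≤ p')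
    {a a' : Fin n → ℚ} (ha : inPpp n p p' a) (ha' : inPpp n p p' a')
    (σ : Equiv.Perm (Fin n)) (w : Fin n → ℚ) (hw : inQl w)
    (H : ∀ i, (p':ℚ) * w i + (clsOf n a (σ i) + rhoV n (σ i)) = clsOf n a' i + rhoV n i) :
    σ = 1 ∧ w = 0 ∧ a = a' := by
  set b : Fin n → ℚ := fun i => clsOf n a i + rhoV n i with hb
  set b' : Fin n → ℚ := fun i => clsOf n a' i + rhoV n i with hb'
  have hp'0 : (0:ℚ) < p' := by exact_mod_cast (by omega : 0 < p')
  have hn0 : (0:ℚ) < n := by exact_mod_cast (by omega : 0 < n)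
  have hnp' : (n:ℚ) ≤ p' := by exact_mod_cast hp'
  have key : ∀ (c : Fin n → ℚ), inPpp n p p' c → ∀ j k : Fin n,
      |(clsOf n c j + rhoV n j) - (clsOf n c k + rhoV n k)| ≤ (p':ℚ) - 1 := by
    intro c hc j k
    have main : ∀ j' k' : Fin n, j'.1 ≤ k'.1 →
        |(clsOf n c j' + rhoV n j') - (clsOf n c k' + rhoV n k')| ≤ (p':ℚ) - 1 := by
      intro j' k' h
      obtain ⟨h1, h2⟩ := b_bounds hc j' k' h
      have hk1 : (k'.1:ℚ) ≤ (n:ℚ) - 1 := by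
        have : (k'.1:ℚ) + 1 ≤ n := by exact_mod_cast k'.2
        linarith
      have hj0 : (0:ℚ) ≤ j'.1 := by positivity
      have hjk2 : (j'.1:ℚ) ≤ (k'.1:ℚ) := by exact_mod_cast h
      have h2n : (2:ℚ) ≤ n := by exact_mod_cast hn
      rw [abs_le]
      constructor <;> linarith
    rcases le_total j.1 k.1 with h | h
    · exact main j k h
    · rw [abs_sub_comm]
      exact main k j h
  have hstrict : ∀ (c : Fin n → ℚ), inPpp n p p' c → ∀ j k : Fin n, j.1 < k.1 →
      1 ≤ (clsOf n c j + rhoV n j) - (clsOf n c k + rhoV n k) := by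
    intro c hc j k hjk
    obtain ⟨h1, -⟩ := b_bounds hc j k (le_of_lt hjk)
    have : (j.1:ℚ) + 1 ≤ k.1 := by exact_mod_cast hjk
    linarith
  obtain ⟨hwz, hws⟩ := hw
  have heq : ∀ j k : Fin n, (p':ℚ) * (w j - w k) = (b' j - b' k) - (b (σ j) - b (σ k)) := by
    intro j k
    have h1 := H j
    have h2 := H k
    simp only [hb, hb'] at h1 h2 ⊢
    ring_nf
    ring_nf at h1 h2
    linarith
  have hdiff : ∀ j k : Fin n, |w j - w k| ≤ 1 := by
    intro j k
    obtain ⟨zj, hzj⟩ := hwz j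
    obtain ⟨zk, hzk⟩ := hwz k
    have hbnd : |(p':ℚ) * (w j - w k)| ≤ 2 * p' - 2 := by
      rw [heq j k]
      have t0 := abs_sub (b' j - b' k) (b (σ j) - b (σ k))
      have t1 := key a' ha' j k
      have t2 := key a ha (σ j) (σ k)
      simp only [hb, hb'] at t1 t2 ⊢
      linarith
    have hz : w j - w k = ((zj - zk : ℤ) : ℚ) := by push_cast; rw [hzj, hzk]
    have habs : |(p':ℚ) * (w j - w k)| = p' * |w j - w k| := by
      rw [abs_mul, abs_of_pos hp'0]
    have hlt2 : |w j - w k| < 2 := by nlinarith [abs_nonneg (w j - w k)]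
    have hzlt : |zj - zk| < 2 := by
      have : |((zj - zk:ℤ):ℚ)| < 2 := by rwa [← hz]
      rw [← Int.cast_abs] at this
      exact_mod_cast this
    have : |zj - zk| ≤ 1 := by omega
    rw [hz, ← Int.cast_abs]
    exact_mod_cast this
  have hw0 : ∀ j, w j = 0 := by
    intro j
    have hsum : (n:ℚ) * w j = ∑ k : Fin n, (w j - w k) := by
      rw [Finset.sum_sub_distrib, hws, Finset.sum_const, Finset.card_univ, Fintype.card_fin,
        sub_zero, nsmul_eq_mul]
    have hers : ∑ k : Fin n, (w j - w k) = ∑ k ∈ Finset.univ.erase j, (w j - w k) :=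
      (Finset.sum_erase (f := fun k => w j - w k) (a := j) Finset.univ (sub_self (w j))).symm
    have hbound : |∑ k ∈ Finset.univ.erase j, (w j - w k)| ≤ (n:ℚ) - 1 := by
      calc |∑ k ∈ Finset.univ.erase j, (w j - w k)|
          ≤ ∑ k ∈ Finset.univ.erase j, |w j - w k| := Finset.abs_sum_le_sum_abs _ _
        _ ≤ ∑ _k ∈ Finset.univ.erase j, (1:ℚ) := Finset.sum_le_sum fun k _ => hdiff j k
        _ = ((Finset.univ.erase j).card : ℚ) := by rw [Finset.sum_const, nsmul_eq_mul, mul_one]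
        _ ≤ (n:ℚ) - 1 := by
            rw [Finset.card_erase_of_mem (Finset.mem_univ j), Finset.card_univ, Fintype.card_fin]
            have h1 : (1:ℕ) ≤ n := by omega
            push_cast [Nat.cast_sub h1]
            linarith
    obtain ⟨zj, hzj⟩ := hwz j
    have h1 : |(n:ℚ) * w j| ≤ (n:ℚ) - 1 := by rw [hsum, hers]; exact hbound
    have h2 : |w j| < 1 := by
      rw [abs_mul, abs_of_pos hn0] at h1
      nlinarith [abs_nonneg (w j)]
    have h3 : |zj| < 1 := by
      have : |((zj:ℤ):ℚ)| < 1 := by rwa [← hzj]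
      rw [← Int.cast_abs] at this
      exact_mod_cast this
    have : zj = 0 := by rw [abs_lt] at h3; omega
    rw [hzj, this, Int.cast_zero]
  have hmono : StrictMono σ := by
    intro j k hjk
    have hjk' : j.1 < k.1 := hjk
    have he := heq j k
    rw [hw0 j, hw0 k, sub_self, mul_zero] at he
    have h1 : (1:ℚ) ≤ b' j - b' k := hstrict a' ha' j k hjk'
    by_contra hc
    push_neg at hc
    have hne : σ k ≠ σ j := fun h => (ne_of_lt hjk) (σ.injective h.symm)
    have hlt0 : σ k < σ j := lt_of_le_of_ne hc hne
    have hlt : (σ k).1 < (σ j).1 := hlt0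
    have h2 : (1:ℚ) ≤ b (σ k) - b (σ j) := hstrict a ha (σ k) (σ j) hlt
    linarith
  have hσ : σ = 1 := by
    haveI : WellFoundedLT (Fin n) := Finite.to_wellFoundedLT
    have hr : Set.range σ = Set.range (id : Fin n → Fin n) := by
      rw [Set.range_id]
      exact Set.range_eq_univ.mpr σ.surjective
    have hfe := (StrictMono.range_inj hmono strictMono_id).1 hr
    exact Equiv.ext fun i => congrFun hfe i
  have hweq : w = 0 := funext fun j => hw0 j
  have hbeq : ∀ i, b i = b' i := by
    intro i
    have hh := H i
    rw [hσ] at hh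
    simp only [Equiv.Perm.coe_one, id_eq] at hh
    rw [hw0 i, mul_zero, zero_add] at hh
    exact hh
  have hcons : ∀ (c : Fin n → ℚ), ∀ j k : Fin n, j.1 + 1 = k.1 →
      (clsOf n c j + rhoV n j) - (clsOf n c k + rhoV n k) = c k + 1 := by
    intro c j k hjk
    rw [clsOf_rho_diff n c j k (by omega)]
    have hset : ∀ i : Fin n, ((j.1 < i.1 ∧ i.1 ≤ k.1) ↔ i = k) := by
      intro i
      constructor
      · rintro ⟨h1, h2⟩
        exact Fin.ext (by omega)
      · rintro rfl
        omega
    have hsc : (∑ i : Fin n, if j.1 < i.1 ∧ i.1 ≤ k.1 then a i else 0)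
        = ∑ i : Fin n, if i = k then a i else 0 := by
      apply Finset.sum_congr rfl
      intro i _
      exact if_congr (hset i) rfl rfl
    rw [Finset.sum_congr rfl (fun i _ => if_congr (hset i) rfl rfl),
      Finset.sum_ite_eq' Finset.univ k c, if_pos (Finset.mem_univ k)]
    have hk : (k.1:ℚ) = (j.1:ℚ) + 1 := by exact_mod_cast hjk.symm
    rw [hk]
    ring
  have haa : ∀ t : Fin n, t.1 ≠ 0 → a t = a' t := by
    intro t ht
    have hjlt : t.1 - 1 < n := by omega
    set j : Fin n := ⟨t.1 - 1, hjlt⟩ with hj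
    have hjt : j.1 + 1 = t.1 := by simp only [hj]; omega
    have e1 := hcons a j t hjt
    have e2 := hcons a' j t hjt
    have f1 := hbeq j
    have f2 := hbeq t
    simp only [hb, hb'] at f1 f2
    linarith
  have ha0 : a = a' := by
    funext t
    by_cases ht : t.1 = 0
    · have hsum : ∑ i, a i = ∑ i, a' i := by rw [ha.2.2, ha'.2.2]
      have hrest : ∑ i ∈ Finset.univ.erase t, a i = ∑ i ∈ Finset.univ.erase t, a' i := by
        apply Finset.sum_congr rfl
        intro i hi
        have hne : i ≠ t := (Finset.mem_erase.mp hi).1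
        apply haa
        intro h0
        exact hne (Fin.ext (by omega))
      have h1 := Finset.add_sum_erase Finset.univ a (Finset.mem_univ t)
      have h2 := Finset.add_sum_erase Finset.univ a' (Finset.mem_univ t)
      linarith
    · exact haa t ht
  exact ⟨hσ, hweq, ha0⟩

lemma Xterm_diag (n p' : ℕ) (Nl : ℚ) (a : Fin n → ℚ) (r : ℚ) :
    Xterm n p' Nl (fun _ => 0) (clsOf n a) (clsOf n a) 1 0 r
      = if r = 0 then 1 else 0 := by
  simp only [Xterm, Pi.zero_apply, mul_zero, zero_add, Equiv.Perm.coe_one, id_eq]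
  rw [supernomial_zeroEta]
  rw [if_pos ?hv]
  case hv =>
    funext i
    rw [wt_zeroF]
    simp
  rw [sub_self, sub_zero, coeffAt_one]
  simp [sgn]

/-- Lemma 2: for `Λ, Λ' ∈ P^{(p,p')}`,
`X_{∅,Λ,Λ'}(q) = δ_{Λ,Λ'}`. -/
theorem statement11 (n p p' : ℕ) (hn : 2 ≤ n) (hp : 1 ≤ p) (hp' : n ≤ p')
    (a a' : Fin n → ℚ) (ha : inPpp n p p' a) (ha' : inPpp n p p' a') :
    Xconf n p' ((p' : ℚ) / p - n) (fun _ => 0) (clsOf n a) (clsOf n a') =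
    fun r : ℚ => if a = a' ∧ r = 0 then 1 else 0 := by
  have hq0 : inQl (0 : Fin n → ℚ) := ⟨fun i => ⟨0, by simp⟩, by simp⟩
  have hterm : ∀ (σ : Equiv.Perm (Fin n)) (w : Fin n → ℚ), inQl w → ∀ r : ℚ,
      Xterm n p' ((p':ℚ)/p - n) (fun _ => 0) (clsOf n a) (clsOf n a') σ w r ≠ 0 →
      σ = 1 ∧ w = 0 ∧ a = a' := by
    intro σ w hw r hne
    simp only [Xterm] at hne
    rw [supernomial_zeroEta] at hne
    split_ifs at hne with hv
    · apply unique_sol hn hp' ha ha' σ w hw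
      intro i
      have hvi := congrFun hv i
      rw [wt_zeroF] at hvi
      rw [Nat.cast_zero, zero_div] at hvi
      simp only [Pi.zero_apply] at hvi
      linarith
    · rw [coeffAt_zeroP, mul_zero] at hne
      exact absurd rfl hne
  by_cases hcase : a = a'
  · subst hcase
    have hqc : inQl (fun i : Fin n =>
        (wt (fun _ => (0:ℕ)) : ℚ) * fw n 1 i - clsOf n a i + clsOf n a i) := by
      constructor
      · intro i
        refine ⟨0, ?_⟩
        rw [wt_zeroF]
        push_cast
        ring
      · apply Finset.sum_eq_zero
        intro i _
        rw [wt_zeroF]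
        push_cast
        ring
    rw [Xconf, if_pos hqc]
    funext r
    simp only [cfSum]
    rw [finsum_eq_single _ ((1 : Equiv.Perm (Fin n)), (⟨0, hq0⟩ : {w : Fin n → ℚ // inQl w}))]
    · rw [Xterm_diag]
      simp
    · intro x hx
      by_contra hne
      obtain ⟨σ, w⟩ := x
      obtain ⟨hσ, hw0, -⟩ := hterm σ w.1 w.2 r hne
      exact hx (Prod.ext hσ (Subtype.ext hw0))
  · rw [Xconf]
    split_ifs with hq
    · funext r
      simp only [cfSum]
      have hzero : ∀ sw : Equiv.Perm (Fin n) × {w : Fin n → ℚ // inQl w},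
          Xterm n p' ((p':ℚ)/p - n) (fun _ => 0) (clsOf n a) (clsOf n a') sw.1 sw.2.1 r = 0 := by
        intro sw
        by_contra hne
        exact hcase (hterm sw.1 sw.2.1 sw.2.2 r hne).2.2
      rw [finsum_eq_zero_of_forall_eq_zero hzero]
      rw [if_neg (fun hc => hcase hc.1)]
    · funext r
      simp [hcase]

end

end ABailey
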